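/- Concavity/convexity of the q-mean: extend θ_q to the diagonal by θ_q(a,a) := a. Then the function (a,b) ↦ θ_q(a,b) on (0,∞) × (0,∞) is concave if q ∈ (1,2) and convex if q ∈ (2,∞), where θ_q(a,b) := ((q−1)/q) (a^q − b^q)/(a^{q−1} − b^{q−1}) for a ≠ b. -/

import Mathlib

/-!
With `p = q - 1`, the `q`-mean is an average of weighted power means:
`θ_q(a,b) = ∫₀¹ M_t(a,b) dt` with `M_t(a,b) = ((1-t) a^p + t b^p)^(1/p)`.
Each `M_t` is positively homogeneous of degree one, and for such a function concavity
(convexity) is equivalent to convexity of the superlevel set `{M_t ≥ 1}` (sublevel set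
`{M_t ≤ 1}`). These sets are `{(1-t) a^p + t b^p ≥ 1}` and `{(1-t) a^p + t b^p ≤ 1}`, convex
because `x ↦ x^p` is concave for `p ≤ 1` and convex for `p ≥ 1`. Integrating in `t` preserves
concavity and convexity.
-/

/-- The `q`-mean of two positive reals, extended to the diagonal by `θ_q(a,a) := a`. -/
noncomputable def qMean (q a b : ℝ) : ℝ :=
  if a = b then a else (q - 1)/q * (a ^ q - b ^ q) / (a ^ (q - 1) - b ^ (q - 1))

open Set MeasureTheory

section Homogeneous

variable {E : Type*} [AddCommGroup E] [Module ℝ E] {s : Set E} {f : E → ℝ}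

theorem Convex.inv_smul_add_smul_mem {x y : E} {u v a b : ℝ} (hs : Convex ℝ s)
    (hu : 0 < u) (hv : 0 < v) (hx : u⁻¹ • x ∈ s) (hy : v⁻¹ • y ∈ s) (ha : 0 ≤ a) (hb : 0 ≤ b)
    (hab : 0 < a * u + b * v) : (a * u + b * v)⁻¹ • (a • x + b • y) ∈ s := by
  convert convex_iff_div.1 hs hx hy (mul_nonneg ha hu.le) (mul_nonneg hb hv.le) hab using 1
  simp only [smul_add, smul_smul]
  congr 2 <;> field_simp

theorem concaveOn_of_homogeneous_of_convex_superlevel (hs : Convex ℝ s)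
    (hcone : ∀ x ∈ s, ∀ c : ℝ, 0 < c → c • x ∈ s) (hpos : ∀ x ∈ s, 0 < f x)
    (hhom : ∀ x ∈ s, ∀ c : ℝ, 0 < c → f (c • x) = c * f x)
    (hlevel : Convex ℝ {x ∈ s | 1 ≤ f x}) : ConcaveOn ℝ s f := by
  refine ⟨hs, fun x hx y hy a b ha hb hab => ?_⟩
  have hC : 0 < a * f x + b * f y :=
    (lt_min (hpos x hx) (hpos y hy)).trans_le (Convex.min_le_combo _ _ ha hb hab)
  -- `a • x + b • y` is `a * f x + b * f y` times a convex combination of points where `f = 1`.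
  have hnormed : ∀ z ∈ s, (f z)⁻¹ • z ∈ {x ∈ s | 1 ≤ f x} := fun z hz =>
    ⟨hcone z hz _ (inv_pos.2 (hpos z hz)),
      by rw [hhom z hz _ (inv_pos.2 (hpos z hz)), inv_mul_cancel₀ (hpos z hz).ne']⟩
  obtain ⟨-, h⟩ := hlevel.inv_smul_add_smul_mem (hpos x hx) (hpos y hy) (hnormed x hx)
    (hnormed y hy) ha hb hC
  rwa [hhom _ (hs hx hy ha hb hab) _ (inv_pos.2 hC), one_le_inv_mul₀ hC] at h

theorem convexOn_of_homogeneous_of_convex_sublevel (hs : Convex ℝ s)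
    (hcone : ∀ x ∈ s, ∀ c : ℝ, 0 < c → c • x ∈ s) (hpos : ∀ x ∈ s, 0 < f x)
    (hhom : ∀ x ∈ s, ∀ c : ℝ, 0 < c → f (c • x) = c * f x)
    (hlevel : Convex ℝ {x ∈ s | f x ≤ 1}) : ConvexOn ℝ s f := by
  refine ⟨hs, fun x hx y hy a b ha hb hab => ?_⟩
  have hC : 0 < a * f x + b * f y :=
    (lt_min (hpos x hx) (hpos y hy)).trans_le (Convex.min_le_combo _ _ ha hb hab)
  have hnormed : ∀ z ∈ s, (f z)⁻¹ • z ∈ {x ∈ s | f x ≤ 1} := fun z hz =>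
    ⟨hcone z hz _ (inv_pos.2 (hpos z hz)),
      by rw [hhom z hz _ (inv_pos.2 (hpos z hz)), inv_mul_cancel₀ (hpos z hz).ne']⟩
  obtain ⟨-, h⟩ := hlevel.inv_smul_add_smul_mem (hpos x hx) (hpos y hy) (hnormed x hx)
    (hnormed y hy) ha hb hC
  rwa [hhom _ (hs hx hy ha hb hab) _ (inv_pos.2 hC), inv_mul_le_one₀ hC] at h

end Homogeneous

section IntervalIntegral

variable {E : Type*} [AddCommMonoid E] [SMul ℝ E] {s : Set E} {f : ℝ → E → ℝ} {a b : ℝ}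

theorem ConcaveOn.intervalIntegral (hab : a ≤ b) (hf : ∀ t ∈ Icc a b, ConcaveOn ℝ s (f t))
    (hint : ∀ x ∈ s, IntervalIntegrable (f · x) volume a b) :
    ConcaveOn ℝ s fun x => ∫ t in a..b, f t x := by
  refine ⟨(hf a (left_mem_Icc.2 hab)).1, fun x hx y hy α β hα hβ hαβ => ?_⟩
  have hxy := (hf a (left_mem_Icc.2 hab)).1 hx hy hα hβ hαβ
  calc α • (∫ t in a..b, f t x) + β • ∫ t in a..b, f t y
      = ∫ t in a..b, (α • f t x + β • f t y) := by
        simp only [smul_eq_mul]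
        rw [intervalIntegral.integral_add ((hint x hx).const_mul α) ((hint y hy).const_mul β),
          intervalIntegral.integral_const_mul, intervalIntegral.integral_const_mul]
    _ ≤ ∫ t in a..b, f t (α • x + β • y) :=
        intervalIntegral.integral_mono_on hab (((hint x hx).const_mul α).add
          ((hint y hy).const_mul β)) (hint _ hxy) fun t ht => (hf t ht).2 hx hy hα hβ hαβ

theorem ConvexOn.intervalIntegral (hab : a ≤ b) (hf : ∀ t ∈ Icc a b, ConvexOn ℝ s (f t))
    (hint : ∀ x ∈ s, IntervalIntegrable (f · x) volume a b) :
    ConvexOn ℝ s fun x => ∫ t in a..b, f t x := by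
  rw [← neg_concaveOn_iff]
  simpa only [Pi.neg_def, intervalIntegral.integral_neg] using
    ConcaveOn.intervalIntegral (f := fun t x => -f t x) hab (fun t ht => (hf t ht).neg)
      fun x hx => (hint x hx).neg

end IntervalIntegral

theorem integral_one_sub_mul_add_mul_rpow {α β r : ℝ} (hαβ : α ≠ β) (hr : -1 < r) :
    ∫ t in (0:ℝ)..1, ((1 - t) * α + t * β) ^ r
      = (β ^ (r + 1) - α ^ (r + 1)) / ((r + 1) * (β - α)) := by
  have hline (t : ℝ) : (1 - t) * α + t * β = (β - α) * t + α := by ring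
  simp_rw [hline]
  rw [intervalIntegral.integral_comp_mul_add (· ^ r) (sub_ne_zero.2 hαβ.symm),
    integral_rpow (Or.inl hr)]
  have : r + 1 ≠ 0 := by linarith
  have : β - α ≠ 0 := sub_ne_zero.2 hαβ.symm
  simp only [mul_zero, zero_add, mul_one, sub_add_cancel, smul_eq_mul]
  field_simp

noncomputable def weightedPowerSum (p t : ℝ) (z : ℝ × ℝ) : ℝ := (1 - t) * z.1 ^ p + t * z.2 ^ p

noncomputable def weightedPowerMean (p t : ℝ) (z : ℝ × ℝ) : ℝ := weightedPowerSum p t z ^ p⁻¹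

section WeightedPowerMean

variable {p t : ℝ} {z : ℝ × ℝ}

theorem weightedPowerSum_pos (ht : t ∈ Icc (0:ℝ) 1) (hz : z ∈ Ioi (0:ℝ) ×ˢ Ioi (0:ℝ)) :
    0 < weightedPowerSum p t z :=
  (lt_min (Real.rpow_pos_of_pos hz.1 p) (Real.rpow_pos_of_pos hz.2 p)).trans_le
    (Convex.min_le_combo _ _ (sub_nonneg.2 ht.2) ht.1 (sub_add_cancel 1 t))

theorem weightedPowerSum_smul (hz : z ∈ Ioi (0:ℝ) ×ˢ Ioi (0:ℝ)) {c : ℝ} (hc : 0 ≤ c) :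
    weightedPowerSum p t (c • z) = c ^ p * weightedPowerSum p t z := by
  simp only [weightedPowerSum, Prod.smul_fst, Prod.smul_snd, smul_eq_mul,
    Real.mul_rpow hc (le_of_lt hz.1), Real.mul_rpow hc (le_of_lt hz.2)]
  ring

theorem weightedPowerMean_smul (hp : p ≠ 0) (ht : t ∈ Icc (0:ℝ) 1)
    (hz : z ∈ Ioi (0:ℝ) ×ˢ Ioi (0:ℝ)) {c : ℝ} (hc : 0 < c) :
    weightedPowerMean p t (c • z) = c * weightedPowerMean p t z := by
  rw [weightedPowerMean, weightedPowerSum_smul hz hc.le,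
    Real.mul_rpow (Real.rpow_nonneg hc.le p) (weightedPowerSum_pos ht hz).le,
    Real.rpow_rpow_inv hc.le hp, weightedPowerMean]

theorem concaveOn_weightedPowerSum (hp₀ : 0 ≤ p) (hp₁ : p ≤ 1) (ht : t ∈ Icc (0:ℝ) 1) :
    ConcaveOn ℝ (Ioi (0:ℝ) ×ˢ Ioi (0:ℝ)) (weightedPowerSum p t) := by
  have hS : Convex ℝ (Ioi (0:ℝ) ×ˢ Ioi (0:ℝ)) := (convex_Ioi 0).prod (convex_Ioi 0)
  have h₁ := ((Real.concaveOn_rpow hp₀ hp₁).comp_linearMap (LinearMap.fst ℝ ℝ ℝ)).subset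
    (fun _ hz => Ioi_subset_Ici_self hz.1) hS
  have h₂ := ((Real.concaveOn_rpow hp₀ hp₁).comp_linearMap (LinearMap.snd ℝ ℝ ℝ)).subset
    (fun _ hz => Ioi_subset_Ici_self hz.2) hS
  exact (h₁.smul (sub_nonneg.2 ht.2)).add (h₂.smul ht.1)

theorem convexOn_weightedPowerSum (hp : 1 ≤ p) (ht : t ∈ Icc (0:ℝ) 1) :
    ConvexOn ℝ (Ioi (0:ℝ) ×ˢ Ioi (0:ℝ)) (weightedPowerSum p t) := by
  have hS : Convex ℝ (Ioi (0:ℝ) ×ˢ Ioi (0:ℝ)) := (convex_Ioi 0).prod (convex_Ioi 0)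
  have h₁ := ((convexOn_rpow hp).comp_linearMap (LinearMap.fst ℝ ℝ ℝ)).subset
    (fun _ hz => Ioi_subset_Ici_self hz.1) hS
  have h₂ := ((convexOn_rpow hp).comp_linearMap (LinearMap.snd ℝ ℝ ℝ)).subset
    (fun _ hz => Ioi_subset_Ici_self hz.2) hS
  exact (h₁.smul (sub_nonneg.2 ht.2)).add (h₂.smul ht.1)

theorem concaveOn_weightedPowerMean (hp₀ : 0 < p) (hp₁ : p ≤ 1) (ht : t ∈ Icc (0:ℝ) 1) :
    ConcaveOn ℝ (Ioi (0:ℝ) ×ˢ Ioi (0:ℝ)) (weightedPowerMean p t) := by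
  refine concaveOn_of_homogeneous_of_convex_superlevel ((convex_Ioi 0).prod (convex_Ioi 0))
    (fun z hz c hc => ⟨mul_pos hc hz.1, mul_pos hc hz.2⟩)
    (fun z hz => Real.rpow_pos_of_pos (weightedPowerSum_pos ht hz) _)
    (fun z hz c hc => weightedPowerMean_smul hp₀.ne' ht hz hc) ?_
  rw [sep_ext_iff.2 fun z hz => by
    rw [weightedPowerMean, Real.le_rpow_inv_iff_of_pos zero_le_one
      (weightedPowerSum_pos ht hz).le hp₀, Real.one_rpow]]
  exact (concaveOn_weightedPowerSum hp₀.le hp₁ ht).convex_ge 1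

theorem convexOn_weightedPowerMean (hp : 1 ≤ p) (ht : t ∈ Icc (0:ℝ) 1) :
    ConvexOn ℝ (Ioi (0:ℝ) ×ˢ Ioi (0:ℝ)) (weightedPowerMean p t) := by
  have hp₀ : 0 < p := zero_lt_one.trans_le hp
  refine convexOn_of_homogeneous_of_convex_sublevel ((convex_Ioi 0).prod (convex_Ioi 0))
    (fun z hz c hc => ⟨mul_pos hc hz.1, mul_pos hc hz.2⟩)
    (fun z hz => Real.rpow_pos_of_pos (weightedPowerSum_pos ht hz) _)
    (fun z hz c hc => weightedPowerMean_smul hp₀.ne' ht hz hc) ?_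
  rw [sep_ext_iff.2 fun z hz => by
    rw [weightedPowerMean, Real.rpow_inv_le_iff_of_pos (weightedPowerSum_pos ht hz).le
      zero_le_one hp₀, Real.one_rpow]]
  exact (convexOn_weightedPowerSum hp ht).convex_le 1

theorem continuous_weightedPowerMean (hp : 0 ≤ p) (z : ℝ × ℝ) :
    Continuous fun t => weightedPowerMean p t z :=
  (Real.continuous_rpow_const (inv_nonneg.2 hp)).comp (by unfold weightedPowerSum; fun_prop)

end WeightedPowerMean

theorem qMean_eq_integral_weightedPowerMean {q : ℝ} (hq : 1 < q) {z : ℝ × ℝ}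
    (hz : z ∈ Ioi (0:ℝ) ×ˢ Ioi (0:ℝ)) :
    qMean q z.1 z.2 = ∫ t in (0:ℝ)..1, weightedPowerMean (q - 1) t z := by
  obtain ⟨a, b⟩ := z
  obtain ⟨ha, hb⟩ : 0 < a ∧ 0 < b := hz
  have hp : 0 < q - 1 := sub_pos.2 hq
  by_cases hab : a = b
  · subst hab
    have hdiag (t : ℝ) : (1 - t) * a ^ (q - 1) + t * a ^ (q - 1) = a ^ (q - 1) := by ring
    simp [qMean, weightedPowerMean, weightedPowerSum, hdiag, Real.rpow_rpow_inv ha.le hp.ne']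
  have hne : a ^ (q - 1) ≠ b ^ (q - 1) := fun h => hab <| by
    rwa [Real.rpow_left_inj ha.le hb.le hp.ne'] at h
  have hpow (x : ℝ) (hx : 0 ≤ x) : (x ^ (q - 1)) ^ ((q - 1)⁻¹ + 1) = x ^ q := by
    rw [← Real.rpow_mul hx]; congr 1; field_simp; ring
  simp only [weightedPowerMean, weightedPowerSum]
  rw [integral_one_sub_mul_add_mul_rpow hne (by linarith [inv_pos.2 hp]), hpow a ha.le,
    hpow b hb.le, qMean, if_neg hab]
  have : a ^ (q - 1) - b ^ (q - 1) ≠ 0 := sub_ne_zero.2 hne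
  have : b ^ (q - 1) - a ^ (q - 1) ≠ 0 := sub_ne_zero.2 hne.symm
  field_simp
  ring

/-- **Concavity/convexity of the `q`-mean.**
With the extension `θ_q(a,a) := a` to the diagonal, the function
`(a,b) ↦ θ_q(a,b)` on `(0,∞) × (0,∞)` is concave if `q ∈ (1,2)` and convex if
`q ∈ (2,∞)`. -/
theorem qMean_concaveOn_convexOn (q : ℝ) (hq : 1 < q) :
    (q < 2 → ConcaveOn ℝ (Set.Ioi (0:ℝ) ×ˢ Set.Ioi (0:ℝ))
      (fun p : ℝ × ℝ => qMean q p.1 p.2)) ∧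
    (2 < q → ConvexOn ℝ (Set.Ioi (0:ℝ) ×ˢ Set.Ioi (0:ℝ))
      (fun p : ℝ × ℝ => qMean q p.1 p.2)) := by
  have hp : 0 < q - 1 := sub_pos.2 hq
  have hrep : EqOn (fun z => ∫ t in (0:ℝ)..1, weightedPowerMean (q - 1) t z)
      (fun z => qMean q z.1 z.2) (Ioi (0:ℝ) ×ˢ Ioi (0:ℝ)) := fun z hz =>
    (qMean_eq_integral_weightedPowerMean hq hz).symm
  have hint : ∀ z ∈ Ioi (0:ℝ) ×ˢ Ioi (0:ℝ),
      IntervalIntegrable (weightedPowerMean (q - 1) · z) volume 0 1 :=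
    fun z _ => (continuous_weightedPowerMean hp.le z).intervalIntegrable 0 1
  refine ⟨fun hq₂ => ?_, fun hq₂ => ?_⟩
  · exact (ConcaveOn.intervalIntegral zero_le_one
      (fun t ht => concaveOn_weightedPowerMean hp (by linarith) ht) hint).congr hrep
  · exact (ConvexOn.intervalIntegral zero_le_one
      (fun t ht => convexOn_weightedPowerMean (by linarith) ht) hint).congr hrep
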